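/- Let G = (V, E) be a finite simple graph with girth at least five. Call a partition π of V a star partition if every block S of π with |S| ≥ 2 contains a vertex c adjacent in G to every other vertex of S. Associate with each partition π its objective vector x(π) ∈ ℚ^{|V|}, the list of utilities u_i(π) of all players sorted in ascending order, and compare objective vectors lexicographically. Then any star partition whose objective vector is lexicographically maximal among all star partitions of G is in the core. -/

import Mathlib

/-!
Suppose `S` blocks `π` and let `z ∈ S` be a member of `S` that is worst off in `π`, with utility `q`.
In a triangle-free graph two adjacent players have disjoint neighbourhoods, so their utilities in `S`
add up to at most `1`; as `z` has a neighbour in `S`, this forces `q < 1/2`, so `z` is alone or a leaf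
of a star with at least three members. If a neighbour `v` of `z` in `S` were a leaf of its star, or
the center of a star with fewer than `1/q - 1` members, then `{z, v}`, resp. `z` added to `v`'s star,
would be a new star block raising `z` above `q` while keeping everyone else who changes above `q`: a
lexicographically better star partition. So every neighbour of `z` in `S` is the center of a star
with at least `1/q - 1 > 1` members and utility at least `1/2`. Two of them have only `z` as a
common neighbour (no 4-cycles), so their utilities in `S` add up to less than `1`, contradicting
blocking; a single one, `v`, would need `S` to be larger than its star, while `z` needs `S` to be
smaller than that star plus one.
-/

open Finset
open scoped Classical

variable {V : Type*} [Fintype V] [DecidableEq V]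

/-- The utility of player `i` in coalition `S` in the simple symmetric fractional
hedonic game given by the graph `G`: the number of neighbors of `i` in `S`
divided by the size of `S`. -/
noncomputable def util (G : SimpleGraph V) (i : V) (S : Finset V) : ℚ :=
  ((S.filter fun j => G.Adj i j).card : ℚ) / (S.card : ℚ)

/-- A partition of the player set `V`, given by the block `part i` of each player `i`. -/
structure FHGPartition (V : Type*) [Fintype V] [DecidableEq V] where
  part : V → Finset V
  mem_part : ∀ i, i ∈ part i
  part_eq : ∀ i j, j ∈ part i → part j = part i

/-- A nonempty coalition `S` blocks `π` if every member is strictly better off in `S`. -/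
def Blocks (G : SimpleGraph V) (π : FHGPartition V) (S : Finset V) : Prop :=
  S.Nonempty ∧ ∀ i ∈ S, util G i (π.part i) < util G i S

/-- A partition is in the core if no nonempty coalition blocks it. -/
def InCore (G : SimpleGraph V) (π : FHGPartition V) : Prop :=
  ∀ S : Finset V, ¬ Blocks G π S

/-- A nonempty coalition `S` weakly blocks `π` if every member is weakly better off
in `S` and some member is strictly better off. -/
def WeaklyBlocks (G : SimpleGraph V) (π : FHGPartition V) (S : Finset V) : Prop :=
  S.Nonempty ∧ (∀ i ∈ S, util G i (π.part i) ≤ util G i S) ∧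
    ∃ j ∈ S, util G j (π.part j) < util G j S

/-- A partition is in the strict core if no nonempty coalition weakly blocks it. -/
def InStrictCore (G : SimpleGraph V) (π : FHGPartition V) : Prop :=
  ∀ S : Finset V, ¬ WeaklyBlocks G π S

/-- A star partition: every block with at least two members contains a center
adjacent to all other members of the block. -/
def IsStarPartition (G : SimpleGraph V) (π : FHGPartition V) : Prop :=
  ∀ i : V, 2 ≤ (π.part i).card →
    ∃ c ∈ π.part i, ∀ j ∈ π.part i, j ≠ c → G.Adj c j

/-- The objective vector of a partition: the list of the utilities of all players,
sorted in ascending order. -/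
noncomputable def objVec (G : SimpleGraph V) (π : FHGPartition V) : List ℚ :=
  Multiset.sort (Finset.univ.val.map fun i => util G i (π.part i)) (· ≤ ·)

section Girth

variable {G : SimpleGraph V}

omit [Fintype V]

omit [DecidableEq V] in
theorem cliqueFree_three_of_girth
    (hgirth : ∀ (v : V) (c : G.Walk v v), c.IsCycle → c.length ≠ 3 ∧ c.length ≠ 4) :
    G.CliqueFree 3 := fun s hs => by
  obtain ⟨v, c, hc, hlen⟩ := SimpleGraph.is3Clique_iff_exists_cycle_length_three.1 ⟨s, hs⟩
  exact (hgirth v c hc).1 hlen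

theorem not_adj_of_adj_of_adj (hG : G.CliqueFree 3) {a b c : V} (hab : G.Adj a b)
    (hbc : G.Adj b c) : ¬ G.Adj a c :=
  fun hac => hG {a, b, c} (SimpleGraph.is3Clique_triple_iff.2 ⟨hab, hac, hbc⟩)

/-- `G` has no 4-cycle. -/
def FourCycleFree (G : SimpleGraph V) : Prop :=
  ∀ ⦃x y w w' : V⦄, x ≠ y → G.Adj x w → G.Adj y w → G.Adj x w' → G.Adj y w' → w = w'

theorem fourCycleFree_of_girth
    (hgirth : ∀ (v : V) (c : G.Walk v v), c.IsCycle → c.length ≠ 3 ∧ c.length ≠ 4) :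
    FourCycleFree G := by
  intro x y w w' hxy hxw hyw hxw' hyw'
  by_contra hww'
  let c : G.Walk w w := .cons hxw.symm (.cons hxw' (.cons hyw'.symm (.cons hyw .nil)))
  have hc : c.IsCycle := by
    have := hxw.ne; have := hyw.ne; have := hxw'.ne; have := hyw'.ne
    simp [c, SimpleGraph.Walk.isCycle_def, SimpleGraph.Walk.isTrail_def]
    tauto
  exact (hgirth w c hc).2 rfl

end Girth

section Utility

variable {G : SimpleGraph V}

omit [Fintype V]

omit [DecidableEq V] in
theorem util_nonneg (i : V) (S : Finset V) : 0 ≤ util G i S := by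
  unfold util; positivity

omit [DecidableEq V] in
theorem exists_adj_of_util_pos {i : V} {S : Finset V} (h : 0 < util G i S) :
    ∃ j ∈ S, G.Adj i j := by
  by_contra! hS
  simp [util, Finset.filter_false_of_mem hS] at h

theorem util_le_card_sub_one_div {i : V} {S : Finset V} (hi : i ∈ S) :
    util G i S ≤ (#S - 1) / #S := by
  have hsub : S.filter (fun j => G.Adj i j) ⊆ S.erase i := fun j hj => by
    rw [mem_filter] at hj
    exact mem_erase.2 ⟨hj.2.ne', hj.1⟩
  have hcard : (#(S.filter fun j => G.Adj i j) : ℚ) ≤ #S - 1 := by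
    rw [← cast_card_erase_of_mem hi]
    exact_mod_cast card_le_card hsub
  exact div_le_div_of_nonneg_right hcard (Nat.cast_nonneg _)

theorem util_add_util_le_one (hG : G.CliqueFree 3) (S : Finset V) {x y : V} (hxy : G.Adj x y) :
    util G x S + util G y S ≤ 1 := by
  have hdisj : Disjoint (S.filter fun j => G.Adj x j) (S.filter fun j => G.Adj y j) :=
    disjoint_filter.2 fun v _ hxv hyv => not_adj_of_adj_of_adj hG hxy hyv hxv
  have hcard : #(S.filter fun j => G.Adj x j) + #(S.filter fun j => G.Adj y j) ≤ #S := by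
    rw [← card_union_of_disjoint hdisj]
    exact card_le_card (union_subset (filter_subset _ _) (filter_subset _ _))
  rw [util, util, ← add_div]
  exact div_le_one_of_le₀ (by exact_mod_cast hcard) (Nat.cast_nonneg _)

theorem util_add_util_lt_one (hC4 : FourCycleFree G) {S : Finset V} {x y : V} (hx : x ∈ S)
    (hy : y ∈ S) (hxy : x ≠ y) (hnadj : ¬ G.Adj x y) :
    util G x S + util G y S < 1 := by
  set Nx := S.filter fun j => G.Adj x j
  set Ny := S.filter fun j => G.Adj y j
  have hinter : #(Nx ∩ Ny) ≤ 1 := card_le_one.2 fun v hv w hw => by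
    simp only [Nx, Ny, mem_inter, mem_filter] at hv hw
    exact hC4 hxy hv.1.2 hv.2.2 hw.1.2 hw.2.2
  have hunion : #(Nx ∪ Ny) + 2 ≤ #S := by
    have hyx : ¬ G.Adj y x := fun h => hnadj h.symm
    have hxN : x ∉ Nx ∪ Ny := by simp [Nx, Ny, hyx]
    have hyN : y ∉ insert x (Nx ∪ Ny) := by
      simp [Nx, Ny, hnadj, hxy.symm]
    calc #(Nx ∪ Ny) + 2 = #(insert y (insert x (Nx ∪ Ny))) := by
          rw [card_insert_of_notMem hyN, card_insert_of_notMem hxN]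
      _ ≤ #S := card_le_card <| insert_subset hy <| insert_subset hx <|
          union_subset (filter_subset _ _) (filter_subset _ _)
  have hcard : #Nx + #Ny < #S := by
    have := card_union_add_card_inter Nx Ny
    omega
  rw [util, util, ← add_div, div_lt_one (by exact_mod_cast card_pos.2 ⟨x, hx⟩)]
  exact_mod_cast hcard

end Utility

section Star

variable {G : SimpleGraph V} {B : Finset V} {c : V}

omit [Fintype V]

def IsCenter (G : SimpleGraph V) (B : Finset V) (c : V) : Prop :=
  c ∈ B ∧ ∀ j ∈ B, j ≠ c → G.Adj c j

def IsLeaf (G : SimpleGraph V) (B : Finset V) (u : V) : Prop :=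
  ∃ c, IsCenter G B c ∧ u ≠ c ∧ 3 ≤ #B

omit [DecidableEq V] in
theorem isCenter_singleton (c : V) : IsCenter G {c} c :=
  ⟨mem_singleton_self c, fun _ hj hne => absurd (mem_singleton.1 hj) hne⟩

namespace IsCenter

theorem erase (h : IsCenter G B c) {x : V} (hxc : x ≠ c) : IsCenter G (B.erase x) c :=
  ⟨mem_erase.2 ⟨hxc.symm, h.1⟩, fun j hj hne => h.2 j (mem_of_mem_erase hj) hne⟩

theorem insert (h : IsCenter G B c) {z : V} (hcz : G.Adj c z) : IsCenter G (insert z B) c :=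
  ⟨mem_insert_of_mem h.1, fun j hj hne => (mem_insert.1 hj).elim (· ▸ hcz) (h.2 j · hne)⟩

theorem util_eq (h : IsCenter G B c) : util G c B = (#B - 1) / #B := by
  have : B.filter (fun j => G.Adj c j) = B.erase c := by
    ext j
    simp only [mem_filter, mem_erase]
    exact ⟨fun ⟨hj, hadj⟩ => ⟨hadj.ne', hj⟩, fun ⟨hne, hj⟩ => ⟨hj, h.2 j hj hne⟩⟩
  rw [util, this, cast_card_erase_of_mem h.1]

omit [DecidableEq V] in
theorem util_eq_of_ne (hG : G.CliqueFree 3) (h : IsCenter G B c) {i : V} (hi : i ∈ B)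
    (hic : i ≠ c) : util G i B = 1 / #B := by
  have : B.filter (fun j => G.Adj i j) = {c} := by
    ext j
    simp only [mem_filter, mem_singleton]
    refine ⟨fun ⟨hj, hij⟩ => ?_, ?_⟩
    · by_contra hjc
      exact not_adj_of_adj_of_adj hG (h.2 i hi hic) hij (h.2 j hj hjc)
    · rintro rfl
      exact ⟨h.1, (h.2 i hi hic).symm⟩
  rw [util, this, card_singleton, Nat.cast_one]

theorem half_le_util (h : IsCenter G B c) (hB : 2 ≤ #B) : 1 / 2 ≤ util G c B := by
  have hB' : (2 : ℚ) ≤ #B := by exact_mod_cast hB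
  rw [h.util_eq, div_le_div_iff₀ two_pos (by linarith)]
  linarith

theorem one_div_card_le_util (hG : G.CliqueFree 3) (h : IsCenter G B c) (hB : 2 ≤ #B) {i : V}
    (hi : i ∈ B) : 1 / #B ≤ util G i B := by
  by_cases hic : i = c
  · have hB' : (2 : ℚ) ≤ #B := by exact_mod_cast hB
    rw [hic, h.util_eq]
    exact div_le_div_of_nonneg_right (by linarith) (Nat.cast_nonneg _)
  · exact (h.util_eq_of_ne hG hi hic).ge

end IsCenter

omit [DecidableEq V] in
theorem IsLeaf.util_eq (hG : G.CliqueFree 3) {u : V} (h : IsLeaf G B u) (hu : u ∈ B) :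
    util G u B = 1 / #B :=
  let ⟨_, hc, huc, _⟩ := h
  hc.util_eq_of_ne hG hu huc

theorem IsLeaf.one_div_card_lt_util_erase (hG : G.CliqueFree 3) {x : V} (h : IsLeaf G B x)
    (hx : x ∈ B) {i : V} (hi : i ∈ B.erase x) : 1 / #B < util G i (B.erase x) := by
  obtain ⟨c, hc, hxc, hB⟩ := h
  have hcard : #(B.erase x) = #B - 1 := card_erase_of_mem hx
  refine lt_of_lt_of_le ?_ ((hc.erase hxc).one_div_card_le_util hG (by omega) hi)
  apply one_div_lt_one_div_of_lt (by rw [hcard]; exact_mod_cast (by omega : 0 < #B - 1))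
  exact_mod_cast card_erase_lt_of_mem hx

end Star

namespace FHGPartition

variable (π : FHGPartition V)

theorem mem_part_comm {i j : V} : j ∈ π.part i ↔ i ∈ π.part j :=
  ⟨fun h => by rw [π.part_eq i j h]; exact π.mem_part i,
    fun h => by rw [π.part_eq j i h]; exact π.mem_part j⟩

theorem disjoint_part_of_notMem {i j : V} (h : j ∉ π.part i) : Disjoint (π.part i) (π.part j) :=
  disjoint_left.2 fun x hxi hxj => h <| by
    rw [← π.part_eq i x hxi, π.part_eq j x hxj]
    exact π.mem_part j

def withBlock (T : Finset V) : FHGPartition V where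
  part i := if i ∈ T then T else π.part i \ T
  mem_part i := by
    split_ifs with h
    · exact h
    · exact mem_sdiff.2 ⟨π.mem_part i, h⟩
  part_eq i j hj := by
    by_cases hi : i ∈ T
    · rw [if_pos hi] at hj
      rw [if_pos hi, if_pos hj]
    · rw [if_neg hi, mem_sdiff] at hj
      rw [if_neg hi, if_neg hj.2, π.part_eq i j hj.1]

variable {π}

theorem withBlock_part_of_mem {T : Finset V} {i : V} (h : i ∈ T) : (π.withBlock T).part i = T :=
  if_pos h

theorem withBlock_part_of_notMem {T : Finset V} {i : V} (h : i ∉ T) :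
    (π.withBlock T).part i = π.part i \ T :=
  if_neg h

end FHGPartition

theorem isLeaf_of_not_isCenter {G : SimpleGraph V} {π : FHGPartition V}
    (hπ : IsStarPartition G π) {u : V} (hu : ¬ IsCenter G (π.part u) u) :
    IsLeaf G (π.part u) u := by
  obtain ⟨j, hj, hju, hnadj⟩ : ∃ j ∈ π.part u, j ≠ u ∧ ¬ G.Adj u j := by
    simpa [IsCenter, π.mem_part u] using hu
  obtain ⟨c, hc⟩ := hπ u (one_lt_card.2 ⟨j, hj, u, π.mem_part u, hju⟩)
  have huc : u ≠ c := by
    rintro rfl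
    exact hnadj (hc.2 j hj hju)
  have hjc : j ≠ c := by
    rintro rfl
    exact hnadj (hc.2 u (π.mem_part u) huc).symm
  exact ⟨c, hc, huc, two_lt_card.2 ⟨u, π.mem_part u, j, hj, c, hc.1, hju.symm, huc, hjc⟩⟩

section Lex

theorem List.lex_lt_of_count_lt {α : Type*} [LinearOrder α] {q : α} :
    ∀ {l₁ l₂ : List α}, l₁.Pairwise (· ≤ ·) → l₂.Pairwise (· ≤ ·) → l₁.length = l₂.length →
      (∀ r < q, l₁.count r = l₂.count r) → l₂.count q < l₁.count q → List.Lex (· < ·) l₁ l₂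
  | [], _, _, _, _, _, hq => by simp at hq
  | _ :: _, [], _, _, hlen, _, _ => by simp at hlen
  | a :: t₁, b :: t₂, h₁, h₂, hlen, hbelow, hq => by
    rcases lt_trichotomy a b with hab | rfl | hba
    · exact .rel hab
    · refine .cons (lex_lt_of_count_lt (q := q) h₁.of_cons h₂.of_cons (by simpa using hlen) ?_ ?_)
      · intro r hr
        have := hbelow r hr
        simp only [count_cons] at this
        omega
      · simp only [count_cons] at hq
        omega
    · -- every entry of `a :: t₁` is at least `a > b`, so `b` and everything up to it is missing
      have hlow : ∀ r ≤ b, (a :: t₁).count r = 0 := fun r hr => count_eq_zero.2 fun hmem =>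
        (lt_of_le_of_lt hr hba).not_ge <| (mem_cons.1 hmem).elim (·.ge) ((pairwise_cons.1 h₁).1 r)
      rcases lt_or_ge b q with hbq | hqb
      · have := hbelow b hbq
        rw [hlow b le_rfl, count_cons_self] at this
        omega
      · rw [hlow q hqb] at hq
        omega

theorem count_objVec (G : SimpleGraph V) (π : FHGPartition V) (r : ℚ) :
    (objVec G π).count r = #(univ.filter fun i => util G i (π.part i) = r) := by
  rw [objVec, ← Multiset.coe_count, Multiset.sort_eq, Multiset.count_map, card_def, filter_val]
  exact congrArg Multiset.card (Multiset.filter_congr fun _ _ => eq_comm)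

theorem lex_objVec_of_threshold {G : SimpleGraph V} {π π' : FHGPartition V} {q : ℚ}
    (h : ∀ i, util G i (π'.part i) ≠ util G i (π.part i) →
      q ≤ util G i (π.part i) ∧ q < util G i (π'.part i))
    {z : V} (hz : util G z (π.part z) = q) (hz' : util G z (π'.part z) ≠ q) :
    List.Lex (· < ·) (objVec G π) (objVec G π') := by
  refine List.lex_lt_of_count_lt (q := q) (Multiset.pairwise_sort _ _)
    (Multiset.pairwise_sort _ _) (by simp [objVec]) (fun r hr => ?_) ?_
  · rw [count_objVec, count_objVec]
    congr 1
    refine filter_congr fun i _ => ?_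
    by_cases hne : util G i (π'.part i) = util G i (π.part i)
    · rw [hne]
    · obtain ⟨h1, h2⟩ := h i hne
      exact iff_of_false (by linarith) (by linarith)
  · rw [count_objVec, count_objVec]
    refine card_lt_card ⟨fun i hi => ?_, fun hsub => ?_⟩
    · simp only [mem_filter, mem_univ, true_and] at hi ⊢
      by_contra hne
      exact (h i (by rw [hi]; exact Ne.symm hne)).2.ne' hi
    · simpa [hz, hz'] using hsub (mem_filter.2 ⟨mem_univ z, hz⟩)

end Lex

section Surgery

variable {G : SimpleGraph V} {π : FHGPartition V} {T : Finset V} {q : ℚ}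

open FHGPartition

theorem part_sdiff_eq_or_erase (hG : G.CliqueFree 3)
    (hblocks : ∀ x ∈ T, q ≤ util G x (π.part x) ∧
      (π.part x ⊆ T ∨ IsLeaf G (π.part x) x ∧ π.part x ∩ T = {x}))
    {i : V} (hi : i ∉ T) :
    π.part i \ T = π.part i ∨ ∃ x ∈ π.part i, IsLeaf G (π.part i) x ∧ q ≤ 1 / #(π.part i) ∧
      π.part i \ T = (π.part i).erase x := by
  by_cases hdisj : Disjoint (π.part i) T
  · exact Or.inl (sdiff_eq_self_iff_disjoint.2 hdisj)
  obtain ⟨x, hxi, hxT⟩ := not_disjoint_iff.1 hdisj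
  have hpart := π.part_eq i x hxi
  obtain ⟨hqx, hsub | ⟨hleaf, hinter⟩⟩ := hblocks x hxT
  · exact absurd (hsub ((π.mem_part_comm).1 hxi)) hi
  rw [hpart] at hqx hleaf hinter
  refine Or.inr ⟨x, hxi, hleaf, hleaf.util_eq hG hxi ▸ hqx, ?_⟩
  rw [← sdiff_singleton_eq_erase, ← hinter, sdiff_inter_self_left]

theorem withBlock_isStarPartition_and_lex (hG : G.CliqueFree 3) (hπ : IsStarPartition G π)
    {t z : V} (hT : IsCenter G T t) (hT2 : 2 ≤ #T) (hqT : q < 1 / #T)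
    (hblocks : ∀ x ∈ T, q ≤ util G x (π.part x) ∧
      (π.part x ⊆ T ∨ IsLeaf G (π.part x) x ∧ π.part x ∩ T = {x}))
    (hz : z ∈ T) (hzq : util G z (π.part z) = q) :
    IsStarPartition G (π.withBlock T) ∧
      List.Lex (· < ·) (objVec G π) (objVec G (π.withBlock T)) := by
  have hnew : ∀ i ∈ T, q < util G i ((π.withBlock T).part i) := fun i hi => by
    rw [withBlock_part_of_mem hi]
    exact hqT.trans_le (hT.one_div_card_le_util hG hT2 hi)
  refine ⟨fun i hi2 => ?_, lex_objVec_of_threshold (fun i hne => ?_) hzq (hnew z hz).ne'⟩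
  · by_cases hi : i ∈ T
    · rw [withBlock_part_of_mem hi]
      exact ⟨t, hT⟩
    rw [withBlock_part_of_notMem hi] at hi2 ⊢
    rcases part_sdiff_eq_or_erase hG hblocks hi with heq | ⟨x, -, ⟨c, hc, hxc, -⟩, -, heq⟩
    · rw [heq] at hi2 ⊢
      exact hπ i hi2
    · rw [heq]
      exact ⟨c, hc.erase hxc⟩
  · by_cases hi : i ∈ T
    · exact ⟨(hblocks i hi).1, hnew i hi⟩
    rw [withBlock_part_of_notMem hi] at hne ⊢
    rcases part_sdiff_eq_or_erase hG hblocks hi with heq | ⟨x, hx, hleaf, hq, heq⟩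
    · exact absurd (by rw [heq]) hne
    have hix : i ∈ (π.part i).erase x := heq ▸ mem_sdiff.2 ⟨π.mem_part i, hi⟩
    have hlt := hleaf.one_div_card_lt_util_erase hG hx hix
    obtain ⟨c, hc, -, h3⟩ := hleaf
    rw [heq]
    exact ⟨hq.trans (hc.one_div_card_le_util hG (by omega) (π.mem_part i)), hq.trans_lt hlt⟩

end Surgery

section Core

variable {G : SimpleGraph V} {π : FHGPartition V}

open FHGPartition

theorem eq_singleton_or_isLeaf_of_util_lt_half (hπ : IsStarPartition G π) {z : V}
    (hhalf : util G z (π.part z) < 1 / 2) : π.part z = {z} ∨ IsLeaf G (π.part z) z := by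
  by_cases hcenter : IsCenter G (π.part z) z
  · have hcard : #(π.part z) ≤ 1 := by
      by_contra h
      exact (hcenter.half_le_util (by omega)).not_gt hhalf
    exact Or.inl (eq_singleton_iff_unique_mem.2
      ⟨π.mem_part z, fun j hj => card_le_one.1 hcard j hj z (π.mem_part z)⟩)
  · exact Or.inr (isLeaf_of_not_isCenter hπ hcenter)

theorem exists_lex_of_adj_leaf (hG : G.CliqueFree 3) (hπ : IsStarPartition G π) {z u : V}
    (hz : π.part z = {z} ∨ IsLeaf G (π.part z) z) (hhalf : util G z (π.part z) < 1 / 2)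
    (hzu : G.Adj z u) (hu : u ∉ π.part z) (hle : util G z (π.part z) ≤ util G u (π.part u))
    (hleaf : IsLeaf G (π.part u) u) :
    ∃ π' : FHGPartition V, IsStarPartition G π' ∧
      List.Lex (· < ·) (objVec G π) (objVec G π') := by
  have hcard : #({z, u} : Finset V) = 2 := card_pair hzu.ne
  have hzT : π.part z ∩ {z, u} = {z} := by
    rw [inter_insert_of_mem (π.mem_part z), inter_singleton_of_notMem hu, insert_empty]
  have huT : π.part u ∩ {z, u} = {u} := by
    rw [inter_insert_of_notMem (fun h => hu (π.mem_part_comm.1 h)),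
      inter_singleton_of_mem (π.mem_part u)]
  refine ⟨_, withBlock_isStarPartition_and_lex hG hπ ((isCenter_singleton u).insert hzu.symm)
    hcard.ge (by rw [hcard]; norm_num [hhalf]) (fun x hx => ?_) (mem_insert_self z _) rfl⟩
  rcases mem_insert.1 hx with rfl | hx
  · refine ⟨le_rfl, hz.imp (fun h => ?_) (⟨·, hzT⟩)⟩
    rw [h, singleton_subset_iff]
    exact hx
  · rw [mem_singleton.1 hx]
    exact ⟨hle, Or.inr ⟨hleaf, huT⟩⟩

theorem exists_lex_of_adj_center (hG : G.CliqueFree 3) (hπ : IsStarPartition G π) {z u : V}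
    (hz : π.part z = {z} ∨ IsLeaf G (π.part z) z) (hzu : G.Adj z u) (hu : u ∉ π.part z)
    (hle : util G z (π.part z) ≤ util G u (π.part u)) (hcenter : IsCenter G (π.part u) u)
    (hlt : util G z (π.part z) < 1 / (#(π.part u) + 1)) :
    ∃ π' : FHGPartition V, IsStarPartition G π' ∧
      List.Lex (· < ·) (objVec G π) (objVec G π') := by
  have hcard : #(insert z (π.part u)) = #(π.part u) + 1 :=
    card_insert_of_notMem fun h => hu (π.mem_part_comm.1 h)
  have hzT : π.part z ∩ insert z (π.part u) = {z} := by
    rw [inter_insert_of_mem (π.mem_part z),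
      disjoint_iff_inter_eq_empty.1 (π.disjoint_part_of_notMem hu), insert_empty]
  refine ⟨_, withBlock_isStarPartition_and_lex hG hπ (hcenter.insert hzu.symm)
    (by rw [hcard]; have := card_pos.2 ⟨u, π.mem_part u⟩; omega) (by rw [hcard]; push_cast; exact hlt)
    (fun x hx => ?_) (mem_insert_self z _) rfl⟩
  rcases mem_insert.1 hx with rfl | hx
  · refine ⟨le_rfl, hz.imp (fun h => ?_) (⟨·, hzT⟩)⟩
    rw [h, singleton_subset_iff]
    exact hx
  rw [π.part_eq u x hx]
  refine ⟨?_, Or.inl (subset_insert _ _)⟩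
  rcases eq_or_ne x u with rfl | hxu
  · exact hle
  rw [hcenter.util_eq_of_ne hG hx hxu]
  exact hlt.le.trans (one_div_le_one_div_of_le (by exact_mod_cast card_pos.2 ⟨x, hx⟩) (by linarith))

theorem isCenter_and_le_of_adj (hG : G.CliqueFree 3) (hπ : IsStarPartition G π)
    (hmax : ∀ π' : FHGPartition V, IsStarPartition G π' →
      ¬ List.Lex (· < ·) (objVec G π) (objVec G π'))
    {z v : V} (hz : π.part z = {z} ∨ IsLeaf G (π.part z) z)
    (hhalf : util G z (π.part z) < 1 / 2) (hzv : G.Adj z v)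
    (hle : util G z (π.part z) ≤ util G v (π.part v)) :
    IsCenter G (π.part v) v ∧ 1 / (#(π.part v) + 1) ≤ util G z (π.part z) := by
  by_cases hv : v ∈ π.part z
  · rw [π.part_eq z v hv]
    obtain hsingle | ⟨c, hc, hzc, -⟩ := hz
    · rw [hsingle, mem_singleton] at hv
      exact absurd hv hzv.ne'
    obtain rfl : v = c := by
      by_contra hvc
      exact not_adj_of_adj_of_adj hG (hc.2 z (π.mem_part z) hzc) hzv (hc.2 v hv hvc)
    refine ⟨hc, ?_⟩
    rw [hc.util_eq_of_ne hG (π.mem_part z) hzc]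
    exact one_div_le_one_div_of_le (by exact_mod_cast card_pos.2 ⟨v, hv⟩) (by linarith)
  by_cases hcenter : IsCenter G (π.part v) v
  · refine ⟨hcenter, not_lt.1 fun hlt => ?_⟩
    obtain ⟨π', hπ', hlex⟩ := exists_lex_of_adj_center hG hπ hz hzv hv hle hcenter hlt
    exact hmax π' hπ' hlex
  · obtain ⟨π', hπ', hlex⟩ := exists_lex_of_adj_leaf hG hπ hz hhalf hzv hv hle
      (isLeaf_of_not_isCenter hπ hcenter)
    exact (hmax π' hπ' hlex).elim

end Core

section Blocking

variable {G : SimpleGraph V} {π : FHGPartition V} {S : Finset V} {z : V}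

omit [Fintype V] in
theorem IsCenter.card_lt_of_util_lt {B : Finset V} {c : V} (h : IsCenter G B c) (hc : c ∈ S)
    (hlt : util G c B < util G c S) : #B < #S := by
  have hB : (0 : ℚ) < #B := by exact_mod_cast card_pos.2 ⟨c, h.1⟩
  have hS : (0 : ℚ) < #S := by exact_mod_cast card_pos.2 ⟨c, hc⟩
  have := hlt.trans_le (util_le_card_sub_one_div hc)
  rw [h.util_eq, div_lt_div_iff₀ hB hS] at this
  exact_mod_cast (by linarith : (#B : ℚ) < #S)

theorem util_lt_half_of_blocks (hG : G.CliqueFree 3) (hzS : z ∈ S)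
    (hblk : ∀ i ∈ S, util G i (π.part i) < util G i S)
    (hmin : ∀ i ∈ S, util G z (π.part z) ≤ util G i (π.part i)) :
    util G z (π.part z) < 1 / 2 := by
  obtain ⟨w, hwS, hzw⟩ := exists_adj_of_util_pos ((util_nonneg _ _).trans_lt (hblk z hzS))
  have := util_add_util_le_one hG S hzw
  have := hblk z hzS
  have := hblk w hwS
  have := hmin w hwS
  linarith

theorem false_of_blocks_of_forall_adj (hG : G.CliqueFree 3) (hC4 : FourCycleFree G)
    (hzS : z ∈ S) (hblk : ∀ i ∈ S, util G i (π.part i) < util G i S)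
    (hhalf : util G z (π.part z) < 1 / 2)
    (hnbr : ∀ v ∈ S, G.Adj z v →
      IsCenter G (π.part v) v ∧ 1 / (#(π.part v) + 1) ≤ util G z (π.part z)) :
    False := by
  set N := S.filter fun j => G.Adj z j
  have hN : ∀ v ∈ N, v ∈ S ∧ G.Adj z v := fun v hv => mem_filter.1 hv
  by_cases h2 : 1 < #N
  · obtain ⟨v, hv, v', hv', hne⟩ := one_lt_card.1 h2
    have hhalf_le : ∀ v ∈ N, 1 / 2 ≤ util G v (π.part v) := fun v hv => by
      obtain ⟨hc, hle⟩ := hnbr v (hN v hv).1 (hN v hv).2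
      have : (2 : ℚ) < #(π.part v) + 1 :=
        (one_div_lt_one_div (by positivity) two_pos).1 (hle.trans_lt hhalf)
      exact hc.half_le_util (by exact_mod_cast (by linarith : (1 : ℚ) < #(π.part v)))
    have := util_add_util_lt_one hC4 (hN v hv).1 (hN v' hv').1 hne
      (not_adj_of_adj_of_adj hG (hN v hv).2.symm (hN v' hv').2)
    have := hblk v (hN v hv).1
    have := hblk v' (hN v' hv').1
    have := hhalf_le v hv
    have := hhalf_le v' hv'
    linarith
  -- otherwise `z` has a single neighbour `v` in `S`, and `S` is both smaller and larger than `v`'s block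
  obtain ⟨v, hvS, hzv⟩ := exists_adj_of_util_pos ((util_nonneg _ _).trans_lt (hblk z hzS))
  have hNv : N = {v} := eq_singleton_iff_unique_mem.2
    ⟨mem_filter.2 ⟨hvS, hzv⟩, fun w hw => card_le_one.1 (not_lt.1 h2) w hw v (mem_filter.2 ⟨hvS, hzv⟩)⟩
  have hzS' : util G z (π.part z) < 1 / #S := by
    refine (hblk z hzS).trans_eq ?_
    change (#N : ℚ) / #S = 1 / #S
    rw [hNv, card_singleton, Nat.cast_one]
  obtain ⟨hc, hle⟩ := hnbr v hvS hzv
  have hlt : #(π.part v) < #S := hc.card_lt_of_util_lt hvS (hblk v hvS)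
  have hgt : (#S : ℚ) < #(π.part v) + 1 := (one_div_lt_one_div (by positivity)
    (by exact_mod_cast card_pos.2 ⟨v, hvS⟩)).1 (hle.trans_lt hzS')
  have : #S < #(π.part v) + 1 := by exact_mod_cast hgt
  omega

end Blocking

/-- In a graph with girth at least five, any star partition whose objective vector
is lexicographically maximal among all star partitions is in the core. -/
theorem stmt_12 (G : SimpleGraph V)
    (hgirth : ∀ (v : V) (c : G.Walk v v), c.IsCycle → c.length ≠ 3 ∧ c.length ≠ 4)
    (π : FHGPartition V) (hstar : IsStarPartition G π)
    (hmax : ∀ π' : FHGPartition V, IsStarPartition G π' →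
      ¬ List.Lex (· < ·) (objVec G π) (objVec G π')) :
    InCore G π := by
  have hG := cliqueFree_three_of_girth hgirth
  rintro S ⟨hSne, hblk⟩
  obtain ⟨z, hzS, hmin⟩ := S.exists_min_image (fun i => util G i (π.part i)) hSne
  have hhalf := util_lt_half_of_blocks hG hzS hblk hmin
  have hz := eq_singleton_or_isLeaf_of_util_lt_half hstar hhalf
  exact false_of_blocks_of_forall_adj hG (fourCycleFree_of_girth hgirth) hzS hblk hhalf
    fun v hvS hzv => isCenter_and_le_of_adj hG hstar hmax hz hhalf hzv (hmin v hvS)
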